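/- Let a > 0, t0 = (a+1)/a, θ̃ = (a+1)^2/(a^2+3a+1), τ̃ = a(a+1)/(a^2+3a+1). Then 0 < 1−θ̃ < 1−τ̃ < θ̃ < 1, and the function y0 : ℝ → ℝ defined as the θ̃-periodic extension of y0(t) = t for t ∈ [0, 1−θ̃], y0(t) = −a(t − (1−θ̃)t0) for t ∈ [1−θ̃, 1−τ̃], y0(t) = t − θ̃ for t ∈ [1−τ̃, θ̃] is continuous, satisfies y0(t + θ̃) = y0(t) for all t ∈ ℝ, and for every t ∈ ℝ not of the form 1−θ̃ + kθ̃ or 1−τ̃ + kθ̃ with k ∈ ℤ, y0 is differentiable at t with y0′(t) = R(y0(t−1)). In particular the period θ̃ of this solution is strictly less than the delay 1. -/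

import Mathlib

/-- The relay nonlinearity: `R a x = 1` if `x ≤ 0`, and `R a x = -a` if `x > 0`. -/
noncomputable def R (a x : ℝ) : ℝ := if x ≤ 0 then 1 else -a

/-!
Write `p = 1 - θ̃` and `q = 1 - τ̃`. Then `y0` is the `θ̃`-periodic extension of a profile with
slopes `1, -a, 1` on `[0, p], [p, q], [q, θ̃]`, and `(1 - θ̃) t0 = q - p`. Since `1 = p + θ̃`, the
delayed value `y0 (t - 1)` equals `y0 (t - p)`. Modulo `θ̃` the profile is positive exactly on
`(0, q - p)` (this uses `2p ≤ q`), so `R (y0 (t - p)) = -a` exactly for `t ∈ (p, q)` modulo `θ̃`,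
which is where the slope is `-a`.
-/

open Set Function

theorem Function.Periodic.continuous_of_continuousAt_Ico {β : Type*} [TopologicalSpace β]
    {f : ℝ → β} {c : ℝ} (hf : Periodic f c) (hc : 0 < c) (h : ∀ x ∈ Ico 0 c, ContinuousAt f x) :
    Continuous f := by
  refine continuous_iff_continuousAt.2 fun x => ?_
  obtain ⟨n, hn, -⟩ := existsUnique_sub_zsmul_mem_Ico hc x 0
  have := (h _ (by simpa using hn)).comp (continuous_sub_right (n • c)).continuousAt
  simpa only [comp_def, hf.sub_zsmul_eq] using this

theorem Function.Periodic.hasDerivAt_of_sub_zsmul {𝕜 F : Type*} [NontriviallyNormedField 𝕜]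
    [NormedAddCommGroup F] [NormedSpace 𝕜 F] {f : 𝕜 → F} {c x : 𝕜} {f' : F}
    (hf : Periodic f c) (n : ℤ) (h : HasDerivAt f f' (x - n • c)) : HasDerivAt f f' x :=
  (hf.zsmul (-n)).funext ▸
    HasDerivAt.comp_add_const x ((-n) • c) (by rwa [neg_zsmul, ← sub_eq_add_neg])

theorem hasDerivAt_of_eqOn_Ioo_affine {f : ℝ → ℝ} {l u m b x : ℝ}
    (hf : EqOn f (fun z => m * z + b) (Ioo l u)) (hx : x ∈ Ioo l u) : HasDerivAt f m x := by
  have hlin : HasDerivAt (fun z => m * z + b) m x := by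
    simpa using ((hasDerivAt_id x).const_mul m).add_const b
  exact hlin.congr_of_eventuallyEq (Filter.eventuallyEq_of_mem (Ioo_mem_nhds hx.1 hx.2) hf)

theorem R_of_nonpos (a : ℝ) {x : ℝ} (hx : x ≤ 0) : R a x = 1 := if_pos hx

theorem R_of_pos (a : ℝ) {x : ℝ} (hx : 0 < x) : R a x = -a := if_neg hx.not_ge

structure IsRelayProfile (a p q θ : ℝ) (y : ℝ → ℝ) : Prop where
  periodic : Periodic y θ
  eq_self : ∀ x ∈ Icc 0 p, y x = x
  eq_fall : ∀ x ∈ Icc p q, y x = -a * (x - (q - p))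
  eq_sub_period : ∀ x ∈ Icc q θ, y x = x - θ

namespace IsRelayProfile

variable {a p q θ : ℝ} {y : ℝ → ℝ}

theorem eq_self_of_mem_Icc (h : IsRelayProfile a p q θ y) {x : ℝ} (hx : x ∈ Icc (q - θ) p) :
    y x = x := by
  rcases le_total 0 x with hx0 | hx0
  · exact h.eq_self x ⟨hx0, hx.2⟩
  · rw [← h.periodic x, h.eq_sub_period _ ⟨by linarith [hx.1], by linarith⟩]
    ring

theorem continuousOn (h : IsRelayProfile a p q θ y) (hp : 0 ≤ p) (hpq : p ≤ q) (hqθ : q ≤ θ) :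
    ContinuousOn y (Icc (q - θ) θ) := by
  rw [← Icc_union_Icc_eq_Icc (b := q) (by linarith) hqθ,
    ← Icc_union_Icc_eq_Icc (b := p) (by linarith) hpq]
  refine .union_of_isClosed (.union_of_isClosed ?_ ?_ isClosed_Icc isClosed_Icc) ?_
    (isClosed_Icc.union isClosed_Icc) isClosed_Icc
  · exact continuousOn_id.congr fun x hx => h.eq_self_of_mem_Icc hx
  · exact (continuous_const.mul (continuous_id.sub continuous_const)).continuousOn.congr h.eq_fall
  · exact (continuous_id.sub continuous_const).continuousOn.congr h.eq_sub_period

theorem continuous (h : IsRelayProfile a p q θ y) (hp : 0 ≤ p) (hpq : p ≤ q) (hqθ : q < θ) :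
    Continuous y :=
  h.periodic.continuous_of_continuousAt_Ico (by linarith) fun _ hx =>
    (h.continuousOn hp hpq hqθ.le).continuousAt
      (Icc_mem_nhds (by linarith [hx.1]) hx.2)

theorem pos_of_mem_Ioo (h : IsRelayProfile a p q θ y) (ha : 0 < a) (hp : 0 ≤ p) {x : ℝ}
    (hx : x ∈ Ioo 0 (q - p)) : 0 < y x := by
  rcases le_total x p with hxp | hxp
  · rw [h.eq_self x ⟨hx.1.le, hxp⟩]
    exact hx.1
  · rw [h.eq_fall x ⟨hxp, by linarith [hx.2]⟩]
    nlinarith [hx.2]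

theorem nonpos_of_mem_Icc (h : IsRelayProfile a p q θ y) (ha : 0 ≤ a) (hpq : 2 * p ≤ q) {x : ℝ}
    (hx : x ∈ Icc (q - p) θ) : y x ≤ 0 := by
  rcases le_total x q with hxq | hxq
  · rw [h.eq_fall x ⟨by linarith [hx.1], hxq⟩]
    nlinarith [hx.1]
  · rw [h.eq_sub_period x ⟨hxq, hx.2⟩]
    linarith [hx.2]

theorem hasDerivAt_of_mem_Ico (h : IsRelayProfile a p q θ y) (ha : 0 < a) (hp : 0 ≤ p)
    (hpq : 2 * p ≤ q) (hqθ : q < θ) {x : ℝ} (hx : x ∈ Ico 0 θ) (hxp : x ≠ p) (hxq : x ≠ q) :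
    HasDerivAt y (R a (y (x - p))) x := by
  rcases hxp.lt_or_gt with hxp | hxp
  · rw [← h.periodic, R_of_nonpos _ (h.nonpos_of_mem_Icc ha.le hpq
      ⟨by linarith [hx.1], by linarith⟩)]
    exact hasDerivAt_of_eqOn_Ioo_affine (l := q - θ) (b := 0)
      (fun z hz => by simp [h.eq_self_of_mem_Icc (Ioo_subset_Icc_self hz)])
      ⟨by linarith [hx.1], hxp⟩
  rcases hxq.lt_or_gt with hxq | hxq
  · rw [R_of_pos _ (h.pos_of_mem_Ioo ha hp ⟨by linarith, by linarith⟩)]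
    exact hasDerivAt_of_eqOn_Ioo_affine (b := a * (q - p))
      (fun z hz => by simp only [h.eq_fall z (Ioo_subset_Icc_self hz)]; ring) ⟨hxp, hxq⟩
  · rw [R_of_nonpos _ (h.nonpos_of_mem_Icc ha.le hpq ⟨by linarith, by linarith [hx.2]⟩)]
    exact hasDerivAt_of_eqOn_Ioo_affine (b := -θ)
      (fun z hz => by simp only [h.eq_sub_period z (Ioo_subset_Icc_self hz)]; ring) ⟨hxq, hx.2⟩

theorem hasDerivAt (h : IsRelayProfile a p q θ y) (ha : 0 < a) (hp : 0 ≤ p) (hpq : 2 * p ≤ q)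
    (hqθ : q < θ) {x : ℝ} (hx : ∀ k : ℤ, x ≠ p + k * θ ∧ x ≠ q + k * θ) :
    HasDerivAt y (R a (y (x - p))) x := by
  obtain ⟨n, hn, -⟩ := existsUnique_sub_zsmul_mem_Ico (show 0 < θ by linarith) x 0
  rw [zero_add] at hn
  have hshift : y (x - p) = y (x - n • θ - p) := by
    rw [sub_right_comm, h.periodic.sub_zsmul_eq]
  rw [hshift]
  refine h.periodic.hasDerivAt_of_sub_zsmul n (h.hasDerivAt_of_mem_Ico ha hp hpq hqθ hn ?_ ?_)
  · exact fun hxp => (hx n).1 (by rw [← hxp, zsmul_eq_mul]; ring)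
  · exact fun hxq => (hx n).2 (by rw [← hxq, zsmul_eq_mul]; ring)

end IsRelayProfile

section Breakpoints

variable {a θ τ : ℝ}

theorem relay_breakpoints_lt (ha : 0 < a) (hθ : θ = (a + 1) ^ 2 / (a ^ 2 + 3 * a + 1))
    (hτ : τ = a * (a + 1) / (a ^ 2 + 3 * a + 1)) :
    0 < 1 - θ ∧ 1 - θ < 1 - τ ∧ 1 - τ < θ ∧ θ < 1 := by
  have hD : 0 < a ^ 2 + 3 * a + 1 := by positivity
  have hp : 1 - θ = a / (a ^ 2 + 3 * a + 1) := by rw [hθ]; field_simp; ring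
  have hq : 1 - τ = (2 * a + 1) / (a ^ 2 + 3 * a + 1) := by rw [hτ]; field_simp; ring
  refine ⟨by rw [hp]; positivity, ?_, ?_, ?_⟩
  · rw [hp, hq, div_lt_div_iff_of_pos_right hD]; linarith
  · rw [hq, hθ, div_lt_div_iff_of_pos_right hD]; nlinarith
  · rw [hθ, div_lt_one hD]; linarith

theorem two_mul_one_sub_le_one_sub (ha : 0 < a) (hθ : θ = (a + 1) ^ 2 / (a ^ 2 + 3 * a + 1))
    (hτ : τ = a * (a + 1) / (a ^ 2 + 3 * a + 1)) : 2 * (1 - θ) ≤ 1 - τ := by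
  rw [hθ, hτ, ← sub_nonneg]
  field_simp
  ring_nf
  positivity

theorem one_sub_mul_eq_sub {t0 : ℝ} (ha : 0 < a) (ht0 : t0 = (a + 1) / a)
    (hθ : θ = (a + 1) ^ 2 / (a ^ 2 + 3 * a + 1)) (hτ : τ = a * (a + 1) / (a ^ 2 + 3 * a + 1)) :
    (1 - θ) * t0 = (1 - τ) - (1 - θ) := by
  have hD : a ^ 2 + 3 * a + 1 ≠ 0 := by positivity
  rw [ht0, hθ, hτ]
  field_simp
  ring

end Breakpoints

/-- for `a > 0`, `θ̃ = (a+1)^2/(a^2+3a+1)`, `τ̃ = a(a+1)/(a^2+3a+1)`,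
one has `0 < 1-θ̃ < 1-τ̃ < θ̃ < 1`, and the `θ̃`-periodic extension `y0` of the
piecewise function `t` on `[0,1-θ̃]`, `-a(t-(1-θ̃)t0)` on `[1-θ̃,1-τ̃]`, `t-θ̃` on
`[1-τ̃,θ̃]` is continuous, `θ̃`-periodic, and away from the points `1-θ̃+kθ̃`,
`1-τ̃+kθ̃` (`k ∈ ℤ`) it is differentiable with `y0'(t) = R (y0 (t-1))`; in
particular the period `θ̃` is strictly less than the delay `1`. -/
theorem stmt_6 (a : ℝ) (ha : 0 < a) (t0 θt τt : ℝ)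
    (ht0 : t0 = (a + 1) / a)
    (hθt : θt = (a + 1) ^ 2 / (a ^ 2 + 3 * a + 1))
    (hτt : τt = a * (a + 1) / (a ^ 2 + 3 * a + 1))
    (y0 : ℝ → ℝ)
    (hy0per : ∀ t : ℝ, y0 (t + θt) = y0 t)
    (hy0a : ∀ t ∈ Set.Icc (0 : ℝ) (1 - θt), y0 t = t)
    (hy0b : ∀ t ∈ Set.Icc (1 - θt) (1 - τt), y0 t = -a * (t - (1 - θt) * t0))
    (hy0c : ∀ t ∈ Set.Icc (1 - τt) θt, y0 t = t - θt) :
    (0 < 1 - θt ∧ 1 - θt < 1 - τt ∧ 1 - τt < θt ∧ θt < 1) ∧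
    Continuous y0 ∧
    (∀ t : ℝ, y0 (t + θt) = y0 t) ∧
    (∀ t : ℝ, (∀ k : ℤ, t ≠ 1 - θt + (k : ℝ) * θt ∧ t ≠ 1 - τt + (k : ℝ) * θt) →
      HasDerivAt y0 (R a (y0 (t - 1))) t) ∧
    θt < 1 := by
  obtain ⟨hp, hpq, hqθ, hθ⟩ := relay_breakpoints_lt ha hθt hτt
  have hprofile : IsRelayProfile a (1 - θt) (1 - τt) θt y0 :=
    { periodic := hy0per
      eq_self := hy0a
      eq_fall := by rwa [← one_sub_mul_eq_sub ha ht0 hθt hτt]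
      eq_sub_period := hy0c }
  refine ⟨⟨hp, hpq, hqθ, hθ⟩, hprofile.continuous hp.le hpq.le hqθ, hy0per, fun t ht => ?_, hθ⟩
  have hdelay : y0 (t - 1) = y0 (t - (1 - θt)) := by rw [← hy0per]; ring_nf
  rw [hdelay]
  exact hprofile.hasDerivAt ha hp.le (two_mul_one_sub_le_one_sub ha hθt hτt) hqθ ht
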